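/- For all x ≥ 1, Γ(x+1) < √(2π)·x^x·e^{−x}·(x² + x/3 + 1/18)^{1/4}. -/

import Mathlib

/-!
Let `D(x) = log Γ(x+1) - log (√(2π) x^x e^{-x} (x² + x/3 + 1/18)^{1/4})`. For `y ≥ 1`,
`D(y+1) - D(y) = 1 - (y + 1/2) log ((1+s)/(1-s)) + (1/4) log ((1+w)/(1-w))` with
`s = 1/(2y+1)` and `w` an explicit rational function of `y`; truncating the odd power series of
`log ((1+t)/(1-t))` (from above for `s`, from below for `w`) reduces `D(y) < D(y+1)` to a
polynomial inequality. On the other hand log-convexity of `Γ` together with Robbins' bound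
`log n! ≤ log √(2π) + (n + 1/2) log n - n + 1/(12n)` gives `D(z) ≤ 2/z`. Hence
`D(x) < D(x+1) ≤ D(x+1+k) ≤ 2/(x+1+k) → 0`.
-/

open Real Filter Topology Finset
open scoped Nat

namespace Real

theorem sum_le_log_one_add_sub_log_one_sub {t : ℝ} (ht₀ : 0 ≤ t) (ht₁ : t < 1) (n : ℕ) :
    ∑ k ∈ range n, 2 * (1 / (2 * (k : ℝ) + 1)) * t ^ (2 * k + 1) ≤ log (1 + t) - log (1 - t) :=
  sum_le_hasSum _ (fun _ _ ↦ by positivity)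
    (hasSum_log_sub_log_of_abs_lt_one (abs_lt.2 ⟨by linarith, ht₁⟩))

theorem log_one_add_sub_log_one_sub_le {t : ℝ} (ht₀ : 0 ≤ t) (ht₁ : t < 1) (n : ℕ) :
    log (1 + t) - log (1 - t) ≤ ∑ k ∈ range n, 2 * (1 / (2 * (k : ℝ) + 1)) * t ^ (2 * k + 1)
      + 2 * (1 / (2 * (n : ℝ) + 1)) * t ^ (2 * n + 1) / (1 - t ^ 2) := by
  have hseries := hasSum_log_sub_log_of_abs_lt_one (abs_lt.2 ⟨by linarith, ht₁⟩)
  have htail := (hasSum_nat_add_iff' n).2 hseries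
  have hgeom := (hasSum_geometric_of_lt_one (sq_nonneg t) (by nlinarith)).mul_left
    (2 * (1 / (2 * (n : ℝ) + 1)) * t ^ (2 * n + 1))
  rw [← div_eq_mul_inv] at hgeom
  have := hasSum_le (fun k ↦ ?_) htail hgeom
  · linarith
  rw [show t ^ (2 * (k + n) + 1) = t ^ (2 * n + 1) * (t ^ 2) ^ k by ring, ← mul_assoc]
  gcongr
  omega

theorem log_one_add_sub_log_one_sub_eq {a b : ℝ} (ha : 0 < a) (hb : 0 < b) :
    log (1 + (a - b) / (a + b)) - log (1 - (a - b) / (a + b)) = log a - log b := by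
  have hplus : 1 + (a - b) / (a + b) = 2 * a / (a + b) := by field_simp; ring
  have hminus : 1 - (a - b) / (a + b) = 2 * b / (a + b) := by field_simp; ring
  rw [hplus, hminus, ← log_div (by positivity) (by positivity), ← log_div ha.ne' hb.ne']
  congr 1
  field_simp

theorem mul_log_add_one_sub_log_le {y : ℝ} (hy : 0 < y) :
    (y + 1 / 2) * (log (y + 1) - log y) ≤ 1 + 1 / (3 * (2 * y + 1) ^ 2) + 1 / (5 * (2 * y + 1) ^ 4)
      + 1 / (7 * ((2 * y + 1) ^ 4 * ((2 * y + 1) ^ 2 - 1))) := by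
  have hs : (y + 1 - y) / (y + 1 + y) = 1 / (2 * y + 1) := by ring_nf
  have hs₁ : 1 / (2 * y + 1) < 1 := by rw [div_lt_one (by positivity)]; linarith
  have h := log_one_add_sub_log_one_sub_le (by positivity) hs₁ 3
  rw [← hs, log_one_add_sub_log_one_sub_eq (by positivity) hy, hs] at h
  have hc : 2 * y + 1 ≠ 0 := by positivity
  have hc' : (2 * y + 1) ^ 2 - 1 ≠ 0 := by nlinarith
  calc (y + 1 / 2) * (log (y + 1) - log y)
      ≤ (y + 1 / 2) * (∑ k ∈ range 3, 2 * (1 / (2 * (k : ℝ) + 1)) * (1 / (2 * y + 1)) ^ (2 * k + 1)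
        + 2 * (1 / (2 * ((3 : ℕ) : ℝ) + 1)) * (1 / (2 * y + 1)) ^ (2 * 3 + 1)
          / (1 - (1 / (2 * y + 1)) ^ 2)) := by gcongr
    _ = _ := by
      rw [show 1 - (1 / (2 * y + 1)) ^ 2 = ((2 * y + 1) ^ 2 - 1) / (2 * y + 1) ^ 2 by field_simp]
      simp only [sum_range_succ, sum_range_zero]
      norm_num
      field_simp

theorem log_Gamma_nat_add_le (n : ℕ) {θ : ℝ} (hθ₀ : 0 ≤ θ) (hθ₁ : θ ≤ 1) :
    log (Gamma (n + θ + 1)) ≤ log (n ! : ℝ) + θ * log (n + 1) := by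
  have hn : (0 : ℝ) < n + 1 := by positivity
  have hconv := convexOn_log_Gamma.2 (show (n + 1 : ℝ) ∈ Set.Ioi 0 from hn)
    (show (n + 2 : ℝ) ∈ Set.Ioi 0 by simp; positivity) (sub_nonneg.2 hθ₁) hθ₀ (by ring)
  have hfact : Gamma (n + 2) = (n + 1) * n ! := by
    rw [show (n + 2 : ℝ) = n + 1 + 1 by ring, Gamma_add_one hn.ne', Gamma_nat_eq_factorial]
  simp only [smul_eq_mul, Function.comp_apply, Gamma_nat_eq_factorial, hfact] at hconv
  rw [log_mul hn.ne' (by positivity), show (1 - θ) * (n + 1) + θ * (n + 2) = n + θ + 1 by ring]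
    at hconv
  linarith

end Real

namespace Stirling

theorem log_stirlingSeq_le {n : ℕ} (hn : n ≠ 0) :
    log (stirlingSeq n) ≤ log √π + 1 / (12 * n) := by
  -- Robbins' bound `1 / (12 k (k + 1)) = 1 / (12 k) - 1 / (12 (k + 1))` telescopes.
  set a : ℕ → ℝ := fun k ↦ log (stirlingSeq (k + 1)) - 1 / (12 * (k + 1 : ℕ))
  have ha_mono : Monotone a := by
    refine monotone_nat_of_le_succ fun k ↦ ?_
    have hk : (0 : ℝ) < k + 1 := by positivity
    have hrobbins := log_stirlingSeq_sdiff_le (k + 1)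
    have htele : 1 / (12 * ((k + 1 : ℕ) : ℝ) * ((k + 1 : ℕ) + 1))
        = 1 / (12 * (k + 1 : ℕ)) - 1 / (12 * (k + 1 + 1 : ℕ)) := by
      push_cast; field_simp; ring
    simp only [a]
    linarith
  have ha_lim : Tendsto a atTop (𝓝 (log √π)) := by
    have hlog : Tendsto (fun k : ℕ ↦ log (stirlingSeq (k + 1))) atTop (𝓝 (log √π)) :=
      ((continuousAt_log (by positivity)).tendsto.comp tendsto_stirlingSeq_sqrt_pi).comp
        (tendsto_add_atTop_nat 1)
    have hinv : Tendsto (fun k : ℕ ↦ 1 / (12 * ((k + 1 : ℕ) : ℝ))) atTop (𝓝 0) :=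
      (tendsto_const_div_atTop_nhds_zero_nat (1 / 12)).comp (tendsto_add_atTop_nat 1) |>.congr
        fun k ↦ div_div _ _ _
    simpa only [sub_zero] using hlog.sub hinv
  obtain ⟨k, rfl⟩ := Nat.exists_eq_succ_of_ne_zero hn
  linarith [ha_mono.ge_of_tendsto ha_lim k]

theorem log_factorial_le {n : ℕ} (hn : n ≠ 0) :
    log (n ! : ℝ) ≤ log √(2 * π) + (n + 1 / 2) * log n - n + 1 / (12 * n) := by
  have hn₀ : (0 : ℝ) < n := by positivity
  have h := log_stirlingSeq_le hn
  rw [log_stirlingSeq_formula, log_mul two_ne_zero hn₀.ne', log_div hn₀.ne' (exp_ne_zero 1),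
    log_exp] at h
  rw [sqrt_mul zero_le_two, log_mul (by positivity) (by positivity), log_sqrt zero_le_two]
  linarith

end Stirling

noncomputable def gammaExcess (x : ℝ) : ℝ :=
  log (Gamma (x + 1)) - (log √(2 * π) + x * log x - x + log (x ^ 2 + x / 3 + 1 / 18) / 4)

theorem gammaExcess_nat_add_le {n : ℕ} (hn : n ≠ 0) {θ : ℝ} (hθ₀ : 0 ≤ θ) (hθ₁ : θ ≤ 1) :
    gammaExcess (n + θ) ≤ 1 / n := by
  set z := n + θ
  have hn₀ : (0 : ℝ) < n := by positivity
  have hz₀ : 0 < z := by positivity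
  have hlogP : 2 * log z ≤ log (z ^ 2 + z / 3 + 1 / 18) := by
    calc 2 * log z = log (z ^ 2) := by rw [log_pow]; norm_num
      _ ≤ _ := log_le_log (by positivity) (by nlinarith)
  have hup : log (n + 1) - log z ≤ (1 - θ) / z := by
    rw [← log_div (by positivity) hz₀.ne']
    calc log ((n + 1) / z) ≤ (n + 1) / z - 1 := log_le_sub_one_of_pos (by positivity)
      _ = (1 - θ) / z := by field_simp; ring
  have hlow : θ / z ≤ log z - log n := by
    rw [← log_div hz₀.ne' hn₀.ne']
    calc θ / z = 1 - (z / n)⁻¹ := by field_simp; ring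
      _ ≤ log (z / n) := one_sub_inv_le_log_of_pos (by positivity)
  have hGamma := log_Gamma_nat_add_le n hθ₀ hθ₁
  have hfact := Stirling.log_factorial_le hn
  have hexcess : gammaExcess z ≤ 1 / (12 * n) + θ / (2 * z) := by
    have h1 : θ * (log (n + 1) - log z) ≤ θ * ((1 - θ) / z) := mul_le_mul_of_nonneg_left hup hθ₀
    have h2 : (n + 1 / 2) * (θ / z) ≤ (n + 1 / 2) * (log z - log n) :=
      mul_le_mul_of_nonneg_left hlow (by positivity)
    have h3 : θ + θ * ((1 - θ) / z) - (n + 1 / 2) * (θ / z) = θ / (2 * z) := by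
      field_simp; ring
    unfold gammaExcess
    nlinarith
  calc gammaExcess z ≤ 1 / (12 * n) + θ / (2 * z) := hexcess
    _ ≤ 1 / (12 * n) + 1 / (2 * n) := by gcongr; linarith
    _ ≤ 1 / n := by field_simp; norm_num

theorem gammaExcess_le_two_div {z : ℝ} (hz : 1 ≤ z) : gammaExcess z ≤ 2 / z := by
  set n := ⌊z⌋₊
  have hn : n ≠ 0 := (Nat.floor_pos.2 hz).ne'
  have hnz : (n : ℝ) ≤ z := Nat.floor_le (by linarith)
  have hzn : z < n + 1 := Nat.lt_floor_add_one z
  have h := gammaExcess_nat_add_le hn (sub_nonneg.2 hnz) (by linarith)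
  rw [add_sub_cancel] at h
  have hn₁ : (1 : ℝ) ≤ n := by exact_mod_cast Nat.one_le_iff_ne_zero.2 hn
  calc gammaExcess z ≤ 1 / n := h
    _ ≤ 2 / z := by rw [div_le_div_iff₀ (by positivity) (by positivity)]; linarith

theorem gammaExcess_add_one_sub {y : ℝ} (hy : 0 < y) :
    gammaExcess (y + 1) - gammaExcess y = 1 - (y + 1 / 2) * (log (y + 1) - log y)
      + (log ((y ^ 2 + y / 3 + 1 / 18) * (y + 1) ^ 2)
        - log (((y + 1) ^ 2 + (y + 1) / 3 + 1 / 18) * y ^ 2)) / 4 := by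
  have hy₁ : 0 < y + 1 := by linarith
  rw [gammaExcess, gammaExcess, Gamma_add_one hy₁.ne', log_mul hy₁.ne' (Gamma_pos_of_pos hy₁).ne',
    log_mul (by positivity) (by positivity), log_mul (by positivity) (by positivity), log_pow,
    log_pow]
  push_cast
  ring

theorem gammaExcess_step_ineq {y : ℝ} (hy : 1 ≤ y) :
    1 / (3 * (2 * y + 1) ^ 2) + 1 / (5 * (2 * y + 1) ^ 4)
        + 1 / (7 * ((2 * y + 1) ^ 4 * ((2 * y + 1) ^ 2 - 1)))
      < 1 / 4 * (2 * ((6 * y ^ 2 + 8 * y + 1) / (36 * y ^ 4 + 84 * y ^ 3 + 56 * y ^ 2 + 8 * y + 1))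
          + 2 / 3 * ((6 * y ^ 2 + 8 * y + 1)
            / (36 * y ^ 4 + 84 * y ^ 3 + 56 * y ^ 2 + 8 * y + 1)) ^ 3) := by
  have hu : 0 ≤ y - 1 := by linarith
  have hc2 : 0 < (2 * y + 1) ^ 2 - 1 := by nlinarith
  rw [← sub_pos]
  -- The numerator of the difference, expanded in powers of `y - 1`, has positive coefficients.
  have hdiff : 1 / 4 * (2 * ((6 * y ^ 2 + 8 * y + 1)
          / (36 * y ^ 4 + 84 * y ^ 3 + 56 * y ^ 2 + 8 * y + 1))
        + 2 / 3 * ((6 * y ^ 2 + 8 * y + 1)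
          / (36 * y ^ 4 + 84 * y ^ 3 + 56 * y ^ 2 + 8 * y + 1)) ^ 3)
      - (1 / (3 * (2 * y + 1) ^ 2) + 1 / (5 * (2 * y + 1) ^ 4)
        + 1 / (7 * ((2 * y + 1) ^ 4 * ((2 * y + 1) ^ 2 - 1))))
      = (777815250 + 7575016200 * (y - 1) + 33996497720 * (y - 1) ^ 2
          + 93178790664 * (y - 1) ^ 3 + 174215232424 * (y - 1) ^ 4 + 235015493712 * (y - 1) ^ 5
          + 235856097072 * (y - 1) ^ 6 + 178861873568 * (y - 1) ^ 7
          + 102984084224 * (y - 1) ^ 8 + 44796135232 * (y - 1) ^ 9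
          + 14489271616 * (y - 1) ^ 10 + 3378975744 * (y - 1) ^ 11 + 537025536 * (y - 1) ^ 12
          + 52061184 * (y - 1) ^ 13 + 2322432 * (y - 1) ^ 14)
        / (210 * (36 * y ^ 4 + 84 * y ^ 3 + 56 * y ^ 2 + 8 * y + 1) ^ 3
          * ((2 * y + 1) ^ 4 * ((2 * y + 1) ^ 2 - 1))) := by
    field_simp
    ring
  rw [hdiff]
  positivity

theorem gammaExcess_lt_gammaExcess_add_one {y : ℝ} (hy : 1 ≤ y) :
    gammaExcess y < gammaExcess (y + 1) := by
  have hy₀ : 0 < y := by linarith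
  set w := (6 * y ^ 2 + 8 * y + 1) / (36 * y ^ 4 + 84 * y ^ 3 + 56 * y ^ 2 + 8 * y + 1) with hw
  have hw₀ : 0 ≤ w := by positivity
  have hw₁ : w < 1 := by rw [hw, div_lt_one (by positivity)]; nlinarith
  have hw_eq : w = ((y ^ 2 + y / 3 + 1 / 18) * (y + 1) ^ 2
      - ((y + 1) ^ 2 + (y + 1) / 3 + 1 / 18) * y ^ 2) / ((y ^ 2 + y / 3 + 1 / 18) * (y + 1) ^ 2
      + ((y + 1) ^ 2 + (y + 1) / 3 + 1 / 18) * y ^ 2) := by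
    rw [hw]; field_simp; ring
  have hlower := sum_le_log_one_add_sub_log_one_sub hw₀ hw₁ 2
  rw [hw_eq, log_one_add_sub_log_one_sub_eq (by positivity) (by positivity), ← hw_eq] at hlower
  simp only [sum_range_succ, sum_range_zero] at hlower
  norm_num at hlower
  linarith [mul_log_add_one_sub_log_le hy₀, gammaExcess_step_ineq hy, gammaExcess_add_one_sub hy₀]

theorem gammaExcess_le_add_nat {y : ℝ} (hy : 1 ≤ y) (k : ℕ) :
    gammaExcess y ≤ gammaExcess (y + k) := by
  induction k with
  | zero => simp
  | succ k ih =>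
    push_cast
    rw [← add_assoc]
    exact ih.trans (gammaExcess_lt_gammaExcess_add_one (by linarith [k.cast_nonneg (α := ℝ)])).le

theorem gammaExcess_neg {x : ℝ} (hx : 1 ≤ x) : gammaExcess x < 0 := by
  have hbound (k : ℕ) : gammaExcess (x + 1) ≤ 2 / (x + 1 + k) :=
    (gammaExcess_le_add_nat (by linarith) k).trans
      (gammaExcess_le_two_div (by linarith [k.cast_nonneg (α := ℝ)]))
  have hlim : Tendsto (fun k : ℕ ↦ 2 / (x + 1 + k)) atTop (𝓝 0) :=
    tendsto_const_nhds.div_atTop (tendsto_atTop_add_const_left _ _ tendsto_natCast_atTop_atTop)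
  linarith [gammaExcess_lt_gammaExcess_add_one hx, ge_of_tendsto' hlim hbound]

theorem stmt_10 (x : ℝ) (hx : 1 ≤ x) :
    Real.Gamma (x + 1) <
      Real.sqrt (2 * Real.pi) * x ^ x * Real.exp (-x) *
        (x^2 + x/3 + 1/18) ^ ((1:ℝ)/4) := by
  have hx₀ : 0 < x := by linarith
  have hP : 0 < x ^ 2 + x / 3 + 1 / 18 := by positivity
  rw [← log_lt_log_iff (Gamma_pos_of_pos (by positivity)) (by positivity),
    log_mul (by positivity) (by positivity), log_mul (by positivity) (by positivity),
    log_mul (by positivity) (by positivity), log_exp, log_rpow hx₀, log_rpow hP]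
  have h := gammaExcess_neg hx
  rw [gammaExcess] at h
  linarith
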